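/- Assume the lens setting with M connected, and let λ : M → ℝ be constant-boundary for the lens. Let i be an index with C i ≠ M, and let λ_i : M → ℝ be a flat extension of λ over D i. Then for every index j such that C j is not a subset of C i, the function λ_i takes the constant value c_i(λ) (the common value of λ on the frontier of C i) at every point of the support D j. -/

import Mathlib

/-!
Outside `C i` the flat extension `λ_i` is constant on each component `K` of `M \ D i`. By
boundary bumping (in a compact connected Hausdorff space the closure of a component of a proper
open set reaches its complement) `closure K` meets `D i ⊆ C i`, so the connected set `closure K`
meets `frontier (C i)` at some `q`. If `q ∈ D i`, then `λ_i = λ(q) = c_i` on `K`. Otherwise `q`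
lies in a maximal `C m ⊂ C i` with `i < m`, on whose frontier `q` sits; bumping once more inside
`C m` gives a point `w ∈ closure K ∩ D i ∩ frontier (C m)`, and `λ_i = λ(w) = λ(q) = c_i` on `K`.
Finally every `D j` with `C j ⊄ C i` lies in the closure of the complement of `C i`.
-/

open Set

section ConnectedComponents

variable {X : Type*} [TopologicalSpace X]

theorem IsPreconnected.inter_frontier_nonempty {s t : Set X} (hs : IsPreconnected s)
    (hst : (s ∩ t).Nonempty) (hst' : (s \ t).Nonempty) : (s ∩ frontier t).Nonempty := by
  rw [frontier_eq_closure_inter_closure]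
  exact isPreconnected_closed_iff.mp hs _ _ isClosed_closure isClosed_closure
    (fun y _ => (em (y ∈ t)).imp (subset_closure ·) (subset_closure ·))
    (hst.mono (inter_subset_inter_right _ subset_closure))
    (hst'.mono (inter_subset_inter_right _ subset_closure))

theorem closure_connectedComponentIn_inter_subset (F : Set X) (x : X) :
    closure (connectedComponentIn F x) ∩ F ⊆ connectedComponentIn F x := by
  rintro w ⟨hw, hwF⟩
  by_cases hx : x ∈ F
  · have hpre : IsPreconnected (insert w (connectedComponentIn F x)) :=
      isPreconnected_connectedComponentIn.subset_closure (subset_insert _ _)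
        (insert_subset hw subset_closure)
    exact hpre.subset_connectedComponentIn (mem_insert_of_mem _ (mem_connectedComponentIn hx))
      (insert_subset hwF (connectedComponentIn_subset _ _)) (mem_insert _ _)
  · simp [connectedComponentIn_eq_empty hx] at hw

theorem exists_isClopen_of_connectedComponent_subset [CompactSpace X] [T2Space X] {x : X}
    {U : Set X} (hU : IsOpen U) (h : connectedComponent x ⊆ U) :
    ∃ V, IsClopen V ∧ x ∈ V ∧ V ⊆ U := by
  rw [connectedComponent_eq_iInter_isClopen] at h
  obtain ⟨t, ht⟩ := hU.isClosed_compl.isCompact.elim_finite_subfamily_closed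
    (fun V : { V : Set X // IsClopen V ∧ x ∈ V } => (V : Set X)) (fun V => V.2.1.isClosed)
    (eq_empty_iff_forall_notMem.mpr fun y hy => hy.1 (h hy.2))
  refine ⟨⋂ V ∈ t, (V : Set X), isClopen_biInter_finset fun V _ => V.2.1,
    mem_iInter₂.mpr fun V _ => V.2.2, fun y hy => ?_⟩
  by_contra hyU
  exact eq_empty_iff_forall_notMem.mp ht y ⟨hyU, hy⟩

theorem closure_connectedComponentIn_diff_nonempty [CompactSpace X] [T2Space X]
    [ConnectedSpace X] {O : Set X} {x : X} (hO : IsOpen O) (hO' : O ≠ univ) (hx : x ∈ O) :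
    (closure (connectedComponentIn O x) \ O).Nonempty := by
  set R := connectedComponentIn O x
  by_contra! hRO
  rw [sdiff_eq_empty] at hRO
  have hR : IsClosed R := closure_subset_iff_isClosed.mp <|
    isPreconnected_connectedComponentIn.closure.subset_connectedComponentIn
      (subset_closure (mem_connectedComponentIn hx)) hRO
  obtain ⟨u, hu, hRu, hclu⟩ :=
    normal_exists_closure_subset hR hO (connectedComponentIn_subset O x)
  -- A clopen subset of the compact space `closure u` that contains `x` and lies in the open set
  -- `u` is clopen in `X`; it is found since the component of `x` there stays inside `R ⊆ u`.
  have : CompactSpace (closure u) := isCompact_iff_compactSpace.mp isClosed_closure.isCompact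
  let x' : closure u := ⟨x, subset_closure (hRu (mem_connectedComponentIn hx))⟩
  have himage : (↑) '' connectedComponent x' ⊆ R :=
    (isPreconnected_connectedComponent.image _ continuous_subtype_val.continuousOn)
      |>.subset_connectedComponentIn ⟨x', mem_connectedComponent, rfl⟩
        (by rintro _ ⟨v, -, rfl⟩; exact hclu v.2)
  have hcomp : connectedComponent x' ⊆ (↑) ⁻¹' u := fun y hy => hRu (himage ⟨y, hy, rfl⟩)
  obtain ⟨V, hV, hxV, hVu⟩ :=
    exists_isClopen_of_connectedComponent_subset (hu.preimage continuous_subtype_val) hcomp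
  obtain ⟨W, hW, rfl⟩ := isOpen_induced_iff.mp hV.isOpen
  have hclosed : IsClosed (closure u ∩ W) := by
    rw [← Subtype.image_preimage_coe]
    exact (hV.isClosed.isCompact.image continuous_subtype_val).isClosed
  have hopen : closure u ∩ W = u ∩ W :=
    Subset.antisymm (fun y hy => ⟨hVu (a := ⟨y, hy.1⟩) hy.2, hy.2⟩)
      (inter_subset_inter_left _ subset_closure)
  have huniv := IsClopen.eq_univ ⟨hclosed, hopen ▸ hu.inter hW⟩ ⟨x, x'.2, hxV⟩
  exact hO' (eq_univ_of_univ_subset (huniv ▸ inter_subset_left.trans hclu))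

theorem IsConnected.closure_connectedComponentIn_inter_diff_nonempty [T2Space X]
    {S O : Set X} {x : X} (hS : IsConnected S) (hSc : IsCompact S) (hO : IsOpen O)
    (hSO : ¬ S ⊆ O) (hx : x ∈ S ∩ O) :
    (closure (connectedComponentIn (S ∩ O) x) \ O).Nonempty := by
  have : CompactSpace S := isCompact_iff_compactSpace.mp hSc
  have : ConnectedSpace S := Subtype.connectedSpace hS
  obtain ⟨w, hw, hwO⟩ := closure_connectedComponentIn_diff_nonempty (x := (⟨x, hx.1⟩ : S))
    (hO.preimage continuous_subtype_val)
    (fun h => hSO fun y hy => (h.symm ▸ mem_univ (⟨y, hy⟩ : S) :)) hx.2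
  have hsub : (↑) '' connectedComponentIn ((↑) ⁻¹' O : Set S) ⟨x, hx.1⟩ ⊆
      connectedComponentIn (S ∩ O) x := by
    simpa only [Subtype.image_preimage_coe] using
      continuous_subtype_val.continuousOn.image_connectedComponentIn_subset
        (show (⟨x, hx.1⟩ : S) ∈ Subtype.val ⁻¹' O from hx.2)
  exact ⟨w, closure_mono hsub
    (image_closure_subset_closure_image continuous_subtype_val ⟨w, hw, rfl⟩), hwO⟩

end ConnectedComponents

section NestedFamily

variable {M ι : Type*} [LinearOrder ι] {C : ι → Set M} {i j m : ι}

def IsNested (C : ι → Set M) : Prop :=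
  ∀ i j, i < j → C j ⊂ C i ∨ Disjoint (C i) (C j)

theorem IsNested.ssubset_of_lt (hnest : IsNested C) (hij : i < j) (h : (C i ∩ C j).Nonempty) :
    C j ⊂ C i :=
  (hnest i j hij).resolve_right (not_disjoint_iff_nonempty_inter.mpr h)

theorem exists_maximal_of_mem_iUnion_gt [Finite ι] {q : M} (hq : q ∈ ⋃ k > i, C k) :
    ∃ m, i < m ∧ q ∈ C m ∧ ∀ k, i < k → ¬ C m ⊂ C k := by
  obtain ⟨k, hik, hqk⟩ := mem_iUnion₂.mp hq
  obtain ⟨m, ⟨him, hqm⟩, hmax⟩ :=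
    Set.Finite.exists_maximalFor C {k | i < k ∧ q ∈ C k} (toFinite _) ⟨k, hik, hqk⟩
  exact ⟨m, him, hqm, fun k hik hmk => hmk.2 (hmax ⟨hik, hmk.1 hqm⟩ hmk.1)⟩

variable [TopologicalSpace M]

def nestedSupport (C : ι → Set M) (i : ι) : Set M :=
  closure (C i \ ⋃ j > i, C j)

theorem nestedSupport_subset (hCi : IsClosed (C i)) : nestedSupport C i ⊆ C i :=
  closure_minimal sdiff_subset hCi

theorem disjoint_interior_nestedSupport (him : i < m) :
    Disjoint (interior (C m)) (nestedSupport C i) :=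
  Disjoint.closure_right (disjoint_left.mpr fun _ hy hy' =>
    hy'.2 (mem_iUnion₂.mpr ⟨m, him, interior_subset hy⟩)) isOpen_interior

theorem IsNested.nestedSupport_subset_closure_compl (hnest : IsNested C) (hji : ¬ C j ⊆ C i) :
    nestedSupport C j ⊆ closure (C i)ᶜ := by
  refine closure_mono fun y ⟨hyj, hy⟩ hyi => ?_
  rcases lt_trichotomy j i with hji' | rfl | hij
  · exact hy (mem_iUnion₂.mpr ⟨i, hji', hyi⟩)
  · exact hji subset_rfl
  · rcases hnest i j hij with h | h
    · exact hji h.subset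
    · exact h.notMem_of_mem_left hyi hyj

/-- As `C i` is connected, `C m` meets the closure of `C i \ C m`; by maximality of `C m` that set
is covered by the support of `i` and the closed sets `C k` disjoint from `C m`. -/
theorem IsNested.inter_nestedSupport_nonempty [Finite ι] (hnest : IsNested C)
    (hclosed : ∀ k, IsClosed (C k)) (hCi : IsPreconnected (C i)) (him : i < m)
    (hmi : C m ⊂ C i) (hm : (C m).Nonempty) (hmax : ∀ k, i < k → ¬ C m ⊂ C k) :
    (C m ∩ nestedSupport C i).Nonempty := by
  set F := ⋃ k ∈ {k | i < k ∧ Disjoint (C m) (C k)}, C k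
  have hcover : C i \ C m ⊆ (C i \ ⋃ k > i, C k) ∪ F := by
    rintro y ⟨hyi, hym⟩
    by_cases hy : y ∈ ⋃ k > i, C k
    · obtain ⟨k, hik, hyk⟩ := mem_iUnion₂.mp hy
      refine Or.inr (mem_biUnion ⟨hik, ?_⟩ hyk)
      rcases lt_trichotomy k m with hkm | rfl | hmk
      · exact ((hnest k m hkm).resolve_left (hmax k hik)).symm
      · exact absurd hyk hym
      · exact (hnest m k hmk).resolve_left fun h => hym (h.subset hyk)
    · exact Or.inl ⟨hyi, hy⟩
  have hF : IsClosed F := (toFinite _).isClosed_biUnion fun k _ => hclosed k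
  have hcl : closure (C i \ C m) ⊆ nestedSupport C i ∪ F := by
    simpa only [nestedSupport, closure_union, hF.closure_eq] using closure_mono hcover
  obtain ⟨y, hyi, hym⟩ := exists_of_ssubset hmi
  obtain ⟨z, -, hzm, hz⟩ := isPreconnected_closed_iff.mp hCi (C m) (closure (C i \ C m))
    (hclosed m) isClosed_closure
    (fun y hy => (em (y ∈ C m)).imp id fun h => subset_closure ⟨hy, h⟩)
    (let ⟨y, hy⟩ := hm; ⟨y, hmi.subset hy, hy⟩) ⟨y, hyi, subset_closure ⟨hyi, hym⟩⟩
  rcases hcl hz with h | h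
  · exact ⟨z, hzm, h⟩
  · obtain ⟨k, hk, hzk⟩ := mem_iUnion₂.mp h
    exact absurd hzk (hk.2.notMem_of_mem_left hzm)

theorem IsNested.nestedSupport_nonempty [Finite ι] (hnest : IsNested C)
    (hclosed : ∀ k, IsClosed (C k)) (hCi : IsConnected (C i)) :
    (nestedSupport C i).Nonempty := by
  obtain ⟨y, hy⟩ := hCi.nonempty
  by_cases hyk : y ∈ ⋃ k > i, C k
  · obtain ⟨m, him, hym, hmax⟩ := exists_maximal_of_mem_iUnion_gt hyk
    exact (hnest.inter_nestedSupport_nonempty hclosed hCi.isPreconnected him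
      (hnest.ssubset_of_lt him ⟨y, hy, hym⟩) ⟨y, hym⟩ hmax).mono inter_subset_right
  · exact ⟨y, subset_closure ⟨hy, hyk⟩⟩

theorem IsNested.exists_frontier_mem_closure_connectedComponentIn [Finite ι] [CompactSpace M]
    [T2Space M] (hnest : IsNested C) (hclosed : ∀ k, IsClosed (C k))
    (hconn : ∀ k, IsConnected (C k)) {q : M} (hq : q ∈ frontier (C i))
    (hqD : q ∉ nestedSupport C i) :
    ∃ m, ∃ w ∈ nestedSupport C i ∩ closure (connectedComponentIn (nestedSupport C i)ᶜ q),
      q ∈ frontier (C m) ∧ w ∈ frontier (C m) := by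
  have hqi : q ∈ C i := (hclosed i).frontier_subset hq
  have hqk : q ∈ ⋃ k > i, C k := by
    by_contra h
    exact hqD (subset_closure ⟨hqi, h⟩)
  obtain ⟨m, him, hqm, hmax⟩ := exists_maximal_of_mem_iUnion_gt hqk
  have hmi : C m ⊂ C i := hnest.ssubset_of_lt him ⟨q, hqi, hqm⟩
  obtain ⟨v, hvm, hvD⟩ := hnest.inter_nestedSupport_nonempty hclosed (hconn i).isPreconnected
    him hmi ⟨q, hqm⟩ hmax
  obtain ⟨w, hw, hwD⟩ := (hconn m).closure_connectedComponentIn_inter_diff_nonempty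
    (hclosed m).isCompact isClosed_closure.isOpen_compl (fun h => h hvm hvD) ⟨hqm, hqD⟩
  rw [notMem_compl_iff] at hwD
  have hwm : w ∈ C m :=
    closure_minimal ((connectedComponentIn_subset _ _).trans inter_subset_left) (hclosed m) hw
  exact ⟨m, w, ⟨hwD, closure_mono (connectedComponentIn_mono _ inter_subset_right) hw⟩,
    ⟨subset_closure hqm, fun h => hq.2 (interior_mono hmi.subset h)⟩,
    ⟨subset_closure hwm, fun h => (disjoint_interior_nestedSupport him).notMem_of_mem_left h hwD⟩⟩

theorem IsNested.eq_of_notMem_of_mem_frontier [Finite ι] [CompactSpace M] [T2Space M]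
    [ConnectedSpace M] (hnest : IsNested C) (hclosed : ∀ k, IsClosed (C k))
    (hconn : ∀ k, IsConnected (C k)) {lam lami : M → ℝ}
    (hlam : ∀ k, ∀ x ∈ frontier (C k), ∀ y ∈ frontier (C k), lam x = lam y)
    (hcont : Continuous lami) (hagree : ∀ x ∈ nestedSupport C i, lami x = lam x)
    (hflat : ∀ x ∈ (nestedSupport C i)ᶜ, ∀ y ∈ connectedComponentIn (nestedSupport C i)ᶜ x,
      lami y = lami x)
    {y z : M} (hy : y ∉ C i) (hz : z ∈ frontier (C i)) : lami y = lam z := by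
  set D := nestedSupport C i
  have hyD : y ∈ Dᶜ := fun h => hy (nestedSupport_subset (hclosed i) h)
  set K := connectedComponentIn Dᶜ y
  have hK : ∀ w ∈ closure K, lami w = lami y := fun w hw =>
    closure_minimal (fun v hv => hflat y hyD v hv) (isClosed_eq hcont continuous_const) hw
  have hKD : (closure K ∩ D).Nonempty := by
    obtain ⟨w, hw, hwD⟩ := closure_connectedComponentIn_diff_nonempty
      isClosed_closure.isOpen_compl
      (compl_ne_univ.mpr (hnest.nestedSupport_nonempty hclosed (hconn i))) hyD
    exact ⟨w, hw, notMem_compl_iff.mp hwD⟩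
  obtain ⟨q, hqK, hq⟩ := isPreconnected_connectedComponentIn.closure.inter_frontier_nonempty
    (hKD.mono (inter_subset_inter_right _ (nestedSupport_subset (hclosed i))))
    ⟨y, subset_closure (mem_connectedComponentIn hyD), hy⟩
  by_cases hqD : q ∈ D
  · calc lami y = lami q := (hK q hqK).symm
      _ = lam q := hagree q hqD
      _ = lam z := hlam i q hq z hz
  · obtain ⟨m, w, ⟨hwD, hwq⟩, hqm, hwm⟩ :=
      hnest.exists_frontier_mem_closure_connectedComponentIn hclosed hconn hq hqD
    rw [← connectedComponentIn_eq (closure_connectedComponentIn_inter_subset _ _ ⟨hqK, hqD⟩)]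
      at hwq
    calc lami y = lami w := (hK w hwq).symm
      _ = lam w := hagree w hwD
      _ = lam q := hlam m w hwm q hqm
      _ = lam z := hlam i q hq z hz

end NestedFamily

theorem zero_varilet_lemma_general {M : Type*} [MetricSpace M] [CompactSpace M] [ConnectedSpace M]
    {ι : Type*} [Fintype ι] [LinearOrder ι]
    (C : ι → Set M)
    (hclosed : ∀ i, IsClosed (C i))
    (hconn : ∀ i, IsConnected (C i))
    (hnest : ∀ i j, i < j → C j ⊂ C i ∨ C i ∩ C j = ∅)
    (D : ι → Set M)
    (hD : ∀ i, D i = closure (C i \ ⋃ j > i, C j))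
    (lam : M → ℝ)
    (hlamcb : ∀ k, ∀ x ∈ frontier (C k), ∀ y ∈ frontier (C k), lam x = lam y)
    (i : ι)
    (lami : M → ℝ) (hlami_cont : Continuous lami)
    (hlami_agree : ∀ x ∈ D i, lami x = lam x)
    (hlami_flat : ∀ x ∈ (D i)ᶜ, ∀ y ∈ connectedComponentIn (D i)ᶜ x, lami y = lami x) :
    ∀ j : ι, ¬ C j ⊆ C i → ∀ x ∈ D j, ∀ z ∈ frontier (C i), lami x = lam z := by
  intro j hj x hx z hz
  obtain rfl : D = nestedSupport C := funext hD
  have hnest' : IsNested C := fun i j h => (hnest i j h).imp_right disjoint_iff_inter_eq_empty.mpr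
  have houter : closure (C i)ᶜ ⊆ {y | lami y = lam z} :=
    closure_minimal (fun y hy => hnest'.eq_of_notMem_of_mem_frontier hclosed hconn hlamcb
      hlami_cont hlami_agree hlami_flat hy hz) (isClosed_eq hlami_cont continuous_const)
  exact houter (hnest'.nestedSupport_subset_closure_compl hj hx)

/-- Zero Varilet Lemma (on the middle space).  In the lens setting with `M`
connected, let `lam : M → ℝ` be constant-boundary for the lens, let `i` be an
index with `C i ≠ M`, and let `lami` be a flat extension of `lam` over `D i`.
Then for every index `j` with `¬ C j ⊆ C i`, `lami` equals the common value
`c_i(lam)` of `lam` on `frontier (C i)` at every point of `D j`. -/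
theorem zero_varilet_lemma {M : Type*} [MetricSpace M] [CompactSpace M] [ConnectedSpace M]
    {ι : Type*} [Fintype ι] [LinearOrder ι]
    (C : ι → Set M)
    (hclosed : ∀ i, IsClosed (C i))
    (hconn : ∀ i, IsConnected (C i))
    (hint : ∀ i, (interior (C i)).Nonempty)
    (hnest : ∀ i j, i < j → C j ⊂ C i ∨ C i ∩ C j = ∅)
    (hcover : ⋃ i, C i = Set.univ)
    (D : ι → Set M)
    (hD : ∀ i, D i = closure (C i \ ⋃ j > i, C j))
    (lam : M → ℝ) (hlamc : Continuous lam)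
    (hlamcb : ∀ k, ∀ x ∈ frontier (C k), ∀ y ∈ frontier (C k), lam x = lam y)
    (i : ι) (hCi : C i ≠ Set.univ)
    (lami : M → ℝ) (hlami_cont : Continuous lami)
    (hlami_agree : ∀ x ∈ D i, lami x = lam x)
    (hlami_flat : ∀ x ∈ (D i)ᶜ, ∀ y ∈ connectedComponentIn (D i)ᶜ x, lami y = lami x) :
    ∀ j : ι, ¬ C j ⊆ C i → ∀ x ∈ D j, ∀ z ∈ frontier (C i), lami x = lam z :=
  zero_varilet_lemma_general C hclosed hconn hnest D hD lam hlamcb i lami hlami_cont hlami_agree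
    hlami_flat
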